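/- arXiv:1910.00551 — 4 statements merged into one kernel-verified Lean document; each statement's English description precedes it below -/
import Mathlib

section
/- Let U : ℝ^d → ℝ be an almost everywhere differentiable function with exp(−U) integrable, satisfying the dissipativity condition ⟨x, ∇U(x)⟩ ≥ a‖x‖² − b for all x ∈ ℝ^d, where a > 0 and b ≥ 0. Then there is a universal constant C > 0 such that for all δ ∈ (0,1), the probability measure π with density proportional to exp(−U) satisfies P_π(‖X‖ ≥ C·√((b + d + log(1/δ))/a)) ≤ δ. -/
/-!
Dissipativity at `s • y` says exactly that `s ↦ U (s • y) - a‖y‖² s² / 2 + b log s` has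
nonnegative derivative for `s ≥ 1` once `a‖y‖² > b`, so `U (3y) ≥ U y + 4a‖y‖² - b log 3`.
Hence on the tail `‖x‖ ≥ 3 √(m / a)`, `m = b + d + log (1 / δ)`, we get
`e^{-U x} ≤ 3^b e^{-4m} e^{-U (x / 3)}`; integrating, the substitution `x ↦ x / 3` costs `3^d`,
so the tail mass is at most `3^(b + d) e^{-4m} ≤ δ`.
-/

open MeasureTheory Real
open scoped ENNReal RealInnerProductSpace

noncomputable section

/-- Euclidean space ℝ^d. -/
abbrev Euc (d : ℕ) := EuclideanSpace ℝ (Fin d)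

/-- Total variation distance between two measures: the supremum over Borel sets `A`
of `|P A - Q A|`. -/
def tvDist {X : Type*} [MeasurableSpace X] (P Q : Measure X) : ℝ :=
  ⨆ A : {s : Set X // MeasurableSet s}, |(P A.1).toReal - (Q A.1).toReal|

/-- The smoothed partition function `Z(u) = ∫ exp(−‖y−u‖²/(4η) − g(y)) dy`. -/
def Zfun (d : ℕ) (η : ℝ) (g : Euc d → ℝ) (u : Euc d) : ℝ :=
  ∫ y, Real.exp (-‖y - u‖ ^ 2 / (4 * η) - g y)

/-- The proposal density
`p(x,y) = Z(x−η∇f(x))⁻¹ · exp(−‖y−(x−η∇f(x))‖²/(4η) − g(y))`. -/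
def propDensity (d : ℕ) (η : ℝ) (f g : Euc d → ℝ) (x y : Euc d) : ℝ :=
  (Zfun d η g (x - η • gradient f x))⁻¹ *
    Real.exp (-‖y - (x - η • gradient f x)‖ ^ 2 / (4 * η) - g y)

/-- The proposal distribution `P_x`, with density `p(x,·)`. -/
def propMeasure (d : ℕ) (η : ℝ) (f g : Euc d → ℝ) (x : Euc d) : Measure (Euc d) :=
  volume.withDensity fun y => ENNReal.ofReal (propDensity d η f g x y)

/-- The Metropolis–Hastings acceptance probability
`α(x,y) = min(1, e^{−U(y)} p(y,x) / (e^{−U(x)} p(x,y)))`, with `U = f + g`. -/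
def accept (d : ℕ) (η : ℝ) (f g : Euc d → ℝ) (x y : Euc d) : ℝ :=
  min 1 (Real.exp (-(f y + g y)) * propDensity d η f g y x /
    (Real.exp (-(f x + g x)) * propDensity d η f g x y))

/-- The Metropolis transition kernel
`T_x(A) = ∫_A p(x,y) α(x,y) dy + δ_x(A) ∫ (1−α(x,y)) p(x,y) dy`. -/
def transKernel (d : ℕ) (η : ℝ) (f g : Euc d → ℝ) (x : Euc d) : Measure (Euc d) :=
  (volume.withDensity fun y =>
      ENNReal.ofReal (propDensity d η f g x y * accept d η f g x y)) +
  ENNReal.ofReal (∫ y, (1 - accept d η f g x y) * propDensity d η f g x y) • Measure.dirac x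

/-- The rejection probability `p^rej_x = ∫ (1−α(x,y)) p(x,y) dy`. -/
def rejProb (d : ℕ) (η : ℝ) (f g : Euc d → ℝ) (x : Euc d) : ℝ :=
  ∫ y, (1 - accept d η f g x y) * propDensity d η f g x y

/-- Unnormalized density `min(p(x,y), e^{U(x)−U(y)} p(y,x))` of the successful-transition
kernel, with `U = f + g`. -/
def succDensity (d : ℕ) (η : ℝ) (f g : Euc d → ℝ) (x y : Euc d) : ℝ :=
  min (propDensity d η f g x y)
    (Real.exp ((f x + g x) - (f y + g y)) * propDensity d η f g y x)

/-- The successful-transition kernel `T^succ_x`, with density proportional to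
`min(p(x,y), e^{U(x)−U(y)} p(y,x))`. -/
def succKernel (d : ℕ) (η : ℝ) (f g : Euc d → ℝ) (x : Euc d) : Measure (Euc d) :=
  volume.withDensity fun y =>
    ENNReal.ofReal ((∫ z, succDensity d η f g x z)⁻¹ * succDensity d η f g x y)

/-- The target measure `Π` with density proportional to `exp(−(f+g))`. -/
def targetMeasure (d : ℕ) (f g : Euc d → ℝ) : Measure (Euc d) :=
  volume.withDensity fun x =>
    ENNReal.ofReal ((∫ z, Real.exp (-(f z + g z)))⁻¹ * Real.exp (-(f x + g x)))

/-- The proximal sampling distribution `O_{η,g}(y)`, with density proportional to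
`exp(−‖q−y‖²/(4η) − g(q))`. -/
def proxMeasure (d : ℕ) (η : ℝ) (g : Euc d → ℝ) (y : Euc d) : Measure (Euc d) :=
  volume.withDensity fun q =>
    ENNReal.ofReal ((Zfun d η g y)⁻¹ * Real.exp (-‖q - y‖ ^ 2 / (4 * η) - g q))


section Dissipative

variable {E : Type*} [NormedAddCommGroup E] [InnerProductSpace ℝ E] [CompleteSpace E]
  {U : E → ℝ} {a b : ℝ}

/-- Where `U` is not differentiable its gradient is the junk value `0`, which violates
dissipativity outside the ball `a‖x‖² ≤ b`. -/
theorem differentiableAt_of_dissipative (hdis : ∀ x, a * ‖x‖ ^ 2 - b ≤ ⟪x, gradient U x⟫)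
    {x : E} (hx : b < a * ‖x‖ ^ 2) : DifferentiableAt ℝ U x := by
  by_contra h
  have hx' := hdis x
  rw [gradient_eq_zero_of_not_differentiableAt h, inner_zero_right] at hx'
  linarith

theorem hasDerivAt_comp_smul_const {y : E} {t : ℝ} (h : DifferentiableAt ℝ U (t • y)) :
    HasDerivAt (fun s : ℝ => U (s • y)) ⟪gradient U (t • y), y⟫ t := by
  simpa [Function.comp_def] using
    h.hasGradientAt.hasFDerivAt.comp_hasDerivAt t ((hasDerivAt_id t).smul_const y)

theorem dissipative_growth_along_ray (ha : 0 ≤ a)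
    (hdis : ∀ x, a * ‖x‖ ^ 2 - b ≤ ⟪x, gradient U x⟫) {y : E} (hy : b < a * ‖y‖ ^ 2)
    {t : ℝ} (ht : 1 ≤ t) :
    U y + a * ‖y‖ ^ 2 * (t ^ 2 - 1) / 2 - b * log t ≤ U (t • y) := by
  set F : ℝ → ℝ := fun s => U (s • y) - a * ‖y‖ ^ 2 / 2 * s ^ 2 + b * log s
  have hF : ∀ s, 1 ≤ s →
      HasDerivAt F (⟪gradient U (s • y), y⟫ - a * ‖y‖ ^ 2 * s + b * s⁻¹) s := by
    intro s hs
    have hsy : b < a * ‖s • y‖ ^ 2 := by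
      have hs2 : a * ‖y‖ ^ 2 * 1 ≤ a * ‖y‖ ^ 2 * s ^ 2 :=
        mul_le_mul_of_nonneg_left (one_le_pow₀ hs) (by positivity)
      rw [norm_smul, mul_pow, Real.norm_eq_abs, sq_abs]
      linarith
    exact (((hasDerivAt_comp_smul_const (differentiableAt_of_dissipative hdis hsy)).sub
      ((hasDerivAt_pow 2 s).const_mul (a * ‖y‖ ^ 2 / 2))).add
      ((hasDerivAt_log (by positivity)).const_mul b)).congr_deriv (by push_cast; ring)
  have hmono : MonotoneOn F (Set.Ici 1) := by
    refine monotoneOn_of_hasDerivWithinAt_nonneg (convex_Ici 1)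
      (fun s hs => (hF s hs).continuousAt.continuousWithinAt)
      (fun s hs => (hF s (interior_subset hs)).hasDerivWithinAt) fun s hs => ?_
    rw [interior_Ici] at hs
    have hs0 : 0 < s := zero_lt_one.trans hs
    have hds := hdis (s • y)
    rw [real_inner_smul_left, real_inner_comm, norm_smul, mul_pow, Real.norm_eq_abs,
      sq_abs] at hds
    have hexpand : s * (⟪gradient U (s • y), y⟫ - a * ‖y‖ ^ 2 * s + b * s⁻¹) =
        s * ⟪gradient U (s • y), y⟫ - a * (s ^ 2 * ‖y‖ ^ 2) + b := by
      field_simp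
    exact le_of_mul_le_mul_left (by rw [mul_zero, hexpand]; linarith) hs0
  have h1t := hmono Set.self_mem_Ici ht ht
  simp only [F, one_smul, one_pow, log_one, mul_zero, add_zero, mul_one] at h1t
  linarith

theorem exp_neg_le_of_dissipative (ha : 0 < a)
    (hdis : ∀ x, a * ‖x‖ ^ 2 - b ≤ ⟪x, gradient U x⟫) {m t : ℝ} (hbm : b < m) (ht : 1 ≤ t)
    {x : E} (hx : t * √(m / a) ≤ ‖x‖) :
    exp (-U x) ≤ exp (b * log t - m * (t ^ 2 - 1) / 2) * exp (-U (t⁻¹ • x)) := by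
  set y := t⁻¹ • x
  have hx_eq : t • y = x := smul_inv_smul₀ (by positivity) x
  have hmy : m ≤ a * ‖y‖ ^ 2 := by
    have hy : √(m / a) ≤ ‖y‖ := by
      rw [norm_smul, Real.norm_eq_abs, abs_inv, abs_of_pos (by positivity),
        le_inv_mul_iff₀ (by positivity)]
      exact hx
    rw [← div_le_iff₀' ha]
    exact (Real.sqrt_le_iff.mp hy).2
  have hray := dissipative_growth_along_ray ha.le hdis (hbm.trans_le hmy) ht
  rw [hx_eq] at hray
  have hgrowth : m * (t ^ 2 - 1) ≤ a * ‖y‖ ^ 2 * (t ^ 2 - 1) :=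
    mul_le_mul_of_nonneg_right hmy (by nlinarith)
  rw [← exp_add, exp_le_exp]
  linarith

end Dissipative

theorem setIntegral_le_of_le_const_mul_comp_inv_smul {E : Type*} [NormedAddCommGroup E]
    [NormedSpace ℝ E] [FiniteDimensional ℝ E] [MeasurableSpace E] [BorelSpace E]
    (μ : Measure E) [μ.IsAddHaarMeasure] {f : E → ℝ} (hf : Integrable f μ) (hf0 : 0 ≤ f)
    {A : Set E} (hA : MeasurableSet A) {t K : ℝ} (ht : 0 < t) (hK : 0 ≤ K)
    (hle : ∀ x ∈ A, f x ≤ K * f (t⁻¹ • x)) :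
    ∫ x in A, f x ∂μ ≤ K * t ^ Module.finrank ℝ E * ∫ x, f x ∂μ := by
  have hft : Integrable (fun x => K * f (t⁻¹ • x)) μ :=
    (hf.comp_smul (inv_ne_zero ht.ne')).const_mul K
  calc ∫ x in A, f x ∂μ ≤ ∫ x in A, K * f (t⁻¹ • x) ∂μ :=
        setIntegral_mono_on hf.integrableOn hft.integrableOn hA hle
    _ ≤ ∫ x, K * f (t⁻¹ • x) ∂μ :=
        setIntegral_le_integral hft (.of_forall fun x => mul_nonneg hK (hf0 _))
    _ = K * t ^ Module.finrank ℝ E * ∫ x, f x ∂μ := by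
        rw [integral_const_mul, Measure.integral_comp_inv_smul_of_nonneg μ f ht.le, smul_eq_mul,
          mul_assoc]

theorem withDensity_ofReal_const_mul_apply {α : Type*} [MeasurableSpace α] {μ : Measure α}
    {f : α → ℝ} (hf : Integrable f μ) (hf0 : 0 ≤ f) {c : ℝ} (hc : 0 ≤ c) {A : Set α}
    (hA : MeasurableSet A) :
    μ.withDensity (fun x => ENNReal.ofReal (c * f x)) A =
      ENNReal.ofReal (c * ∫ x in A, f x ∂μ) := by
  rw [withDensity_apply _ hA, ← integral_const_mul,
    ofReal_integral_eq_lintegral_ofReal (hf.restrict.const_mul c)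
      (.of_forall fun x => mul_nonneg hc (hf0 x))]

/-- With `C = 3`, `log 3 ≤ 2 < 4` lets `exp (-4 (b + d))` absorb `3 ^ (b + d)`. -/
theorem exp_mul_three_pow_le {b δ : ℝ} (hb : 0 ≤ b) (d : ℕ) (hδ : 0 < δ) (hδ1 : δ ≤ 1) :
    exp (b * log 3 - (b + d + log (1 / δ)) * (3 ^ 2 - 1) / 2) * 3 ^ d ≤ δ := by
  have hpow : (3 : ℝ) ^ d = exp (d * log 3) := by
    rw [← log_pow, exp_log (by positivity)]
  have hlog3 : log 3 ≤ 2 := by linarith [log_le_sub_one_of_pos (by norm_num : (0 : ℝ) < 3)]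
  rw [hpow, ← exp_add, one_div, log_inv]
  calc _ ≤ exp (log δ) := exp_le_exp.2 <| by
          nlinarith [log_nonpos hδ.le hδ1, mul_le_mul_of_nonneg_left hlog3 hb,
            mul_le_mul_of_nonneg_left hlog3 d.cast_nonneg]
    _ = δ := exp_log hδ

/-- tail bound under dissipativity. If `U` is almost everywhere
differentiable with `⟨x, ∇U(x)⟩ ≥ a‖x‖² − b`, then for the measure `π ∝ exp(−U)`,
`P_π(‖X‖ ≥ C√((b + d + log(1/δ))/a)) ≤ δ`. -/
theorem dissipative_tail_bound :
    ∃ C > (0:ℝ),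
      ∀ (d : ℕ) (U : Euc d → ℝ) (a b : ℝ),
        1 ≤ d → 0 < a → 0 ≤ b →
        (∀ᵐ x ∂(volume : Measure (Euc d)), DifferentiableAt ℝ U x) →
        (∀ x : Euc d, ⟪x, gradient U x⟫ ≥ a * ‖x‖ ^ 2 - b) →
        Integrable (fun x : Euc d => Real.exp (-U x)) →
        ∀ δ ∈ Set.Ioo (0:ℝ) 1,
          (volume.withDensity fun x : Euc d =>
              ENNReal.ofReal ((∫ z, Real.exp (-U z))⁻¹ * Real.exp (-U x)))
            {x : Euc d | C * Real.sqrt ((b + d + Real.log (1 / δ)) / a) ≤ ‖x‖} ≤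
            ENNReal.ofReal δ := by
  refine ⟨3, three_pos, fun d U a b _ ha hb _ hdis hint δ hδ => ?_⟩
  set m := b + d + log (1 / δ)
  have hbm : b < m := by
    linarith [log_pos (one_lt_one_div hδ.1 hδ.2), d.cast_nonneg (α := ℝ)]
  have hpos : 0 ≤ fun x : Euc d => exp (-U x) := fun x => (exp_pos _).le
  have hZ : 0 ≤ ∫ z, exp (-U z) := integral_nonneg hpos
  have hA : MeasurableSet {x : Euc d | 3 * √(m / a) ≤ ‖x‖} :=
    measurableSet_le measurable_const measurable_norm
  have htail := setIntegral_le_of_le_const_mul_comp_inv_smul volume hint hpos hA three_pos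
    (exp_nonneg _) fun x hx => exp_neg_le_of_dissipative ha hdis hbm (by norm_num) hx
  rw [finrank_euclideanSpace_fin] at htail
  rw [withDensity_ofReal_const_mul_apply hint hpos (inv_nonneg.2 hZ) hA]
  refine ENNReal.ofReal_le_ofReal ?_
  calc _ ≤ (∫ z, exp (-U z))⁻¹ * (exp (b * log 3 - m * (3 ^ 2 - 1) / 2) * 3 ^ d *
          ∫ z, exp (-U z)) := mul_le_mul_of_nonneg_left htail (inv_nonneg.2 hZ)
    _ ≤ exp (b * log 3 - m * (3 ^ 2 - 1) / 2) * 3 ^ d := by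
        rw [mul_left_comm]
        exact mul_le_of_le_one_right (by positivity) inv_mul_le_one
    _ ≤ δ := exp_mul_three_pow_le hb d hδ.1 hδ.2.le
end
end

section
/- Suppose g : ℝ^d → ℝ is M-Lipschitz and η > 0 is such that Z(u) = ∫ exp(−‖q−u‖²/(4η) − g(q)) dq is finite for all u. Then the function G(y) = −log Z(y) is M-Lipschitz: |G(y₁) − G(y₂)| ≤ M·‖y₁ − y₂‖ for all y₁, y₂ ∈ ℝ^d. -/
open MeasureTheory Real
open scoped ENNReal RealInnerProductSpace

noncomputable section

/-- Substituting `q ↦ q + (v - u)` moves the shift from the kernel `φ` onto `g`. -/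
theorem integral_exp_sub_le_exp_mul_integral {E : Type*} [SeminormedAddCommGroup E]
    [MeasurableSpace E] [MeasurableAdd E] {μ : Measure E} [μ.IsAddRightInvariant]
    {φ g : E → ℝ} {M : ℝ} (hg : ∀ x y, g x - g y ≤ M * ‖x - y‖) {u : E}
    (hu : Integrable (fun q => exp (φ (q - u) - g q)) μ) (v : E) :
    ∫ q, exp (φ (q - v) - g q) ∂μ ≤ exp (M * ‖u - v‖) * ∫ q, exp (φ (q - u) - g q) ∂μ := by
  have hpoint : ∀ q, exp (φ (q - u) - g (q + (v - u))) ≤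
      exp (M * ‖u - v‖) * exp (φ (q - u) - g q) := fun q => by
    have hgq := hg q (q + (v - u))
    rw [sub_add_cancel_left, norm_neg, norm_sub_rev] at hgq
    rw [← exp_add, exp_le_exp]
    linarith
  calc ∫ q, exp (φ (q - v) - g q) ∂μ
      = ∫ q, exp (φ (q - u) - g (q + (v - u))) ∂μ := by
        rw [← integral_add_right_eq_self _ (v - u)]
        congr with q
        rw [show q + (v - u) - v = q - u by abel]
    _ ≤ ∫ q, exp (M * ‖u - v‖) * exp (φ (q - u) - g q) ∂μ :=
        integral_mono_of_nonneg (ae_of_all _ fun _ => (exp_pos _).le) (hu.const_mul _)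
          (ae_of_all _ hpoint)
    _ = exp (M * ‖u - v‖) * ∫ q, exp (φ (q - u) - g q) ∂μ := integral_const_mul _ _

theorem abs_log_sub_log_le_of_le_exp_mul {X : Type*} [PseudoMetricSpace X] {f : X → ℝ} {M : ℝ}
    (hf : ∀ x, 0 < f x) (h : ∀ x y, f y ≤ exp (M * dist x y) * f x) (x y : X) :
    |log (f x) - log (f y)| ≤ M * dist x y := by
  have hlog : ∀ x y, log (f y) - log (f x) ≤ M * dist x y := fun x y => by
    have := log_le_log (hf y) (h x y)
    rw [log_mul (exp_ne_zero _) (hf x).ne', log_exp] at this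
    linarith
  rw [abs_sub_le_iff]
  exact ⟨dist_comm x y ▸ hlog y x, hlog x y⟩

theorem G_lipschitz_general (d : ℕ) (η M : ℝ) (g : Euc d → ℝ)
    (hg : ∀ x y : Euc d, |g x - g y| ≤ M * ‖x - y‖)
    (hZ : ∀ u : Euc d, Integrable (fun q : Euc d => Real.exp (-‖q - u‖ ^ 2 / (4 * η) - g q))) :
    ∀ y₁ y₂ : Euc d,
      |(-Real.log (Zfun d η g y₁)) - (-Real.log (Zfun d η g y₂))| ≤ M * ‖y₁ - y₂‖ := by
  intro y₁ y₂
  have hZ_le : ∀ u v, Zfun d η g v ≤ exp (M * dist u v) * Zfun d η g u := fun u v => by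
    rw [dist_eq_norm]
    exact integral_exp_sub_le_exp_mul_integral (φ := fun x => -‖x‖ ^ 2 / (4 * η))
      (fun x y => (abs_le.mp (hg x y)).2) (hZ u) v
  rw [neg_sub_neg, abs_sub_comm, ← dist_eq_norm]
  exact abs_log_sub_log_le_of_le_exp_mul (fun u => integral_exp_pos (hZ u)) hZ_le y₁ y₂

/-- if `g` is `M`-Lipschitz and the smoothed partition function
`Z(u) = ∫ exp(−‖q−u‖²/(4η) − g(q)) dq` is finite everywhere, then `G = −log Z`
is `M`-Lipschitz. -/
theorem G_lipschitz (d : ℕ) (η M : ℝ) (g : Euc d → ℝ)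
    (hd : 1 ≤ d) (hη : 0 < η)
    (hg : ∀ x y : Euc d, |g x - g y| ≤ M * ‖x - y‖)
    (hZ : ∀ u : Euc d, Integrable (fun q : Euc d => Real.exp (-‖q - u‖ ^ 2 / (4 * η) - g q))) :
    ∀ y₁ y₂ : Euc d,
      |(-Real.log (Zfun d η g y₁)) - (-Real.log (Zfun d η g y₂))| ≤ M * ‖y₁ - y₂‖ :=
  G_lipschitz_general d η M g hg hZ
end
end

section
/- Suppose g : ℝ^d → ℝ is convex and η > 0 is such that Z(u) = ∫ exp(−‖q−u‖²/(4η) − g(q)) dq is finite for all u. Then Z is log-concave; equivalently, the function G(y) = −log Z(y) is convex on ℝ^d. -/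
open MeasureTheory Real
open scoped ENNReal RealInnerProductSpace

noncomputable section

open Set
open scoped Pointwise NNReal

/-!
The Prékopa–Leindler inequality: if `f x ^ (1 - t) * g y ^ t ≤ h ((1 - t) • x + t • y)` for all
`x, y`, then `(∫ f) ^ (1 - t) * (∫ g) ^ t ≤ ∫ h`. On `ℝ`, after rescaling `f` and `g` to a common
supremum, the superlevel sets `{f > s}` and `{g > s}` satisfy the one-dimensional Brunn–Minkowski
inequality `|A| + |B| ≤ |A + B|`, and the layer-cake formula integrates this over `s`. Fubini
carries the inequality to products, hence to `ℝⁿ` and to every Euclidean space.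

Since `(q, u) ↦ ‖q - u‖² / (4η) + g q` is jointly convex, the integrands of `Z` at `x`, `y` and
`(1 - t) • x + t • y` satisfy the hypothesis of Prékopa–Leindler, so
`Z x ^ (1 - t) * Z y ^ t ≤ Z ((1 - t) • x + t • y)`, which is the convexity of `-log Z`.
-/

namespace ENNReal

theorem min_le_rpow_one_sub_mul_rpow {t : ℝ} (ht₀ : 0 ≤ t) (ht₁ : t ≤ 1) (a b : ℝ≥0∞) :
    min a b ≤ a ^ (1 - t) * b ^ t := by
  calc min a b = min a b ^ (1 - t) * min a b ^ t := by
        rw [← rpow_add_of_nonneg _ _ (sub_nonneg.2 ht₁) ht₀, sub_add_cancel, rpow_one]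
    _ ≤ a ^ (1 - t) * b ^ t := by gcongr <;> first | exact sub_nonneg.2 ht₁ | simp

theorem rpow_one_sub_mul_rpow_le_add {t : ℝ} (ht₀ : 0 < t) (ht₁ : t < 1) (a b : ℝ≥0∞) :
    a ^ (1 - t) * b ^ t ≤ ENNReal.ofReal (1 - t) * a + ENNReal.ofReal t * b := by
  induction a using recTopCoe with
  | top => simp [mul_top, (ofReal_pos.2 (sub_pos.2 ht₁)).ne']
  | coe x =>
  induction b using recTopCoe with
  | top => simp [mul_top, (ofReal_pos.2 ht₀).ne']
  | coe y =>
  have h₁ : 0 ≤ 1 - t := sub_nonneg.2 ht₁.le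
  have h := NNReal.geom_mean_le_arith_mean2_weighted (1 - t).toNNReal t.toNNReal x y
    (by rw [← Real.toNNReal_add h₁ ht₀.le]; simp)
  rw [Real.coe_toNNReal _ h₁, Real.coe_toNNReal _ ht₀.le] at h
  rw [← coe_rpow_of_nonneg _ h₁, ← coe_rpow_of_nonneg _ ht₀.le, ENNReal.ofReal, ENNReal.ofReal]
  exact_mod_cast h

theorem iSup_rpow {ι : Sort*} {p : ℝ} (hp : 0 < p) (a : ι → ℝ≥0∞) :
    (⨆ i, a i) ^ p = ⨆ i, a i ^ p :=
  (orderIsoRpow p hp).map_iSup a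

end ENNReal

theorem Real.volume_setOf_ofReal_lt_inter_Ioi (c : ℝ≥0∞) :
    volume ({s : ℝ | ENNReal.ofReal s < c} ∩ Ioi 0) = c := by
  induction c using ENNReal.recTopCoe with
  | top => simp
  | coe r =>
    have : {s : ℝ | ENNReal.ofReal s < r} ∩ Ioi 0 = Ioo 0 (r : ℝ) := by
      ext s
      simp only [mem_inter_iff, mem_ofPred_eq, mem_Ioi, mem_Ioo]
      constructor
      · rintro ⟨h, hs⟩
        exact ⟨hs, by simpa [ENNReal.ofReal_lt_iff_lt_toReal hs.le] using h⟩
      · rintro ⟨hs, h⟩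
        exact ⟨by simpa [ENNReal.ofReal_lt_iff_lt_toReal hs.le] using h, hs⟩
    simp [this]

theorem MeasureTheory.lintegral_eq_lintegral_meas_ofReal_lt {α : Type*} [MeasurableSpace α]
    (μ : Measure α) [SFinite μ] {f : α → ℝ≥0∞} (hf : Measurable f) :
    ∫⁻ a, f a ∂μ = ∫⁻ s in Ioi 0, μ {a | ENNReal.ofReal s < f a} := by
  set S : Set (ℝ × α) := {p | ENNReal.ofReal p.1 < f p.2}
  have hS : MeasurableSet S :=
    measurableSet_lt (ENNReal.measurable_ofReal.comp measurable_fst) (hf.comp measurable_snd)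
  calc ∫⁻ a, f a ∂μ
      = ∫⁻ a, (∫⁻ s in Ioi 0, S.indicator 1 (s, a)) ∂μ := by
        refine lintegral_congr fun a => ?_
        rw [← Real.volume_setOf_ofReal_lt_inter_Ioi (f a),
          ← Measure.restrict_apply' measurableSet_Ioi]
        exact (lintegral_indicator_one (measurable_prodMk_right hS)).symm
    _ = ∫⁻ s in Ioi 0, ∫⁻ a, S.indicator 1 (s, a) ∂μ :=
        lintegral_lintegral_swap ((measurable_one.indicator hS).comp measurable_swap).aemeasurable
    _ = ∫⁻ s in Ioi 0, μ {a | ENNReal.ofReal s < f a} :=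
        lintegral_congr fun s => lintegral_indicator_one (measurable_prodMk_left hS)

namespace Real

theorem volume_add_le_volume_add_of_isCompact {K L : Set ℝ} (hK : IsCompact K) (hL : IsCompact L)
    (hK₀ : K.Nonempty) (hL₀ : L.Nonempty) : volume K + volume L ≤ volume (K + L) := by
  set k := sSup K
  set l := sInf L
  have hk : k ∈ K := hK.sSup_mem hK₀
  have hl : l ∈ L := hL.sInf_mem hL₀
  -- the translates `l +ᵥ K` and `k +ᵥ L` of `K` and `L` lie in `K + L` and meet only at `k + l`
  have hinter : (l +ᵥ K) ∩ (k +ᵥ L) ⊆ {k + l} := by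
    rintro _ ⟨⟨x, hx, rfl⟩, ⟨y, hy, hxy⟩⟩
    have : x ≤ k := le_csSup hK.bddAbove hx
    have : l ≤ y := csInf_le hL.bddBelow hy
    simp only [vadd_eq_add] at hxy ⊢
    rw [mem_singleton_iff]
    linarith
  calc volume K + volume L = volume (l +ᵥ K) + volume (k +ᵥ L) := by
        rw [measure_vadd, measure_vadd]
    _ = volume ((l +ᵥ K) ∪ (k +ᵥ L)) + volume ((l +ᵥ K) ∩ (k +ᵥ L)) :=
        (measure_union_add_inter _ (hL.vadd k).measurableSet).symm
    _ = volume ((l +ᵥ K) ∪ (k +ᵥ L)) := by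
        rw [measure_mono_null hinter (measure_singleton _), add_zero]
    _ ≤ volume (K + L) := by
        refine measure_mono (union_subset ?_ ?_)
        · rintro _ ⟨x, hx, rfl⟩
          show l + x ∈ K + L
          rw [add_comm l x]
          exact add_mem_add hx hl
        · rintro _ ⟨y, hy, rfl⟩
          exact add_mem_add hk hy

theorem volume_add_le_volume_add {A B : Set ℝ} (hA : MeasurableSet A) (hB : MeasurableSet B)
    (hA₀ : A.Nonempty) (hB₀ : B.Nonempty) : volume A + volume B ≤ volume (A + B) := by
  obtain ⟨a, ha⟩ := hA₀
  obtain ⟨b, hb⟩ := hB₀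
  rw [hA.measure_eq_iSup_isCompact, hB.measure_eq_iSup_isCompact]
  simp_rw [iSup_and']
  refine ENNReal.biSup_add_biSup_le' ⟨∅, empty_subset _, isCompact_empty⟩
    ⟨∅, empty_subset _, isCompact_empty⟩ fun K ⟨hKA, hK⟩ L ⟨hLB, hL⟩ => ?_
  calc volume K + volume L ≤ volume (insert a K) + volume (insert b L) :=
        add_le_add (measure_mono (subset_insert _ _)) (measure_mono (subset_insert _ _))
    _ ≤ volume (insert a K + insert b L) :=
        volume_add_le_volume_add_of_isCompact (hK.insert a) (hL.insert b)
          (insert_nonempty _ _) (insert_nonempty _ _)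
    _ ≤ volume (A + B) :=
        measure_mono (add_subset_add (insert_subset ha hKA) (insert_subset hb hLB))

theorem volume_smul_add_smul_le {t : ℝ} (ht₀ : 0 ≤ t) (ht₁ : t ≤ 1) {A B : Set ℝ}
    (hA : MeasurableSet A) (hB : MeasurableSet B) (hA₀ : A.Nonempty) (hB₀ : B.Nonempty) :
    ENNReal.ofReal (1 - t) * volume A + ENNReal.ofReal t * volume B
      ≤ volume ((1 - t) • A + t • B) := by
  have h := volume_add_le_volume_add (hA.const_smul₀ (1 - t)) (hB.const_smul₀ t)
    (hA₀.smul_set) (hB₀.smul_set)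
  rwa [Measure.addHaar_smul, Measure.addHaar_smul, Module.finrank_self, pow_one, pow_one,
    abs_of_nonneg (sub_nonneg.2 ht₁), abs_of_nonneg ht₀] at h

theorem lintegral_add_le_of_min_le {t : ℝ} (ht₀ : 0 ≤ t) (ht₁ : t ≤ 1) {f g h : ℝ → ℝ≥0∞}
    (hf : Measurable f) (hg : Measurable g) (hh : Measurable h) (hfg : ⨆ x, f x = ⨆ x, g x)
    (hfgh : ∀ x y, min (f x) (g y) ≤ h ((1 - t) • x + t • y)) :
    ENNReal.ofReal (1 - t) * (∫⁻ x, f x) + ENNReal.ofReal t * (∫⁻ x, g x) ≤ ∫⁻ x, h x := by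
  have hlevel : ∀ φ : ℝ → ℝ≥0∞, Measurable fun s : ℝ => volume {x | ENNReal.ofReal s < φ x} :=
    fun φ => Antitone.measurable fun s s' hss' =>
      measure_mono fun x hx => (ENNReal.ofReal_le_ofReal hss').trans_lt hx
  rw [lintegral_eq_lintegral_meas_ofReal_lt volume hf,
    lintegral_eq_lintegral_meas_ofReal_lt volume hg,
    lintegral_eq_lintegral_meas_ofReal_lt volume hh, ← lintegral_const_mul _ (hlevel f),
    ← lintegral_const_mul _ (hlevel g), ← lintegral_add_left ((hlevel f).const_mul _)]
  refine setLIntegral_mono (hlevel h) fun s _ => ?_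
  -- below the common supremum both superlevel sets are nonempty, above it both are empty
  by_cases hs : ENNReal.ofReal s < ⨆ x, f x
  · have hA : {x | ENNReal.ofReal s < f x}.Nonempty := lt_iSup_iff.1 hs
    have hB : {x | ENNReal.ofReal s < g x}.Nonempty := lt_iSup_iff.1 (hs.trans_eq hfg)
    refine (volume_smul_add_smul_le ht₀ ht₁ (measurableSet_lt measurable_const hf)
      (measurableSet_lt measurable_const hg) hA hB).trans (measure_mono ?_)
    rintro _ ⟨_, ⟨x, hx, rfl⟩, _, ⟨y, hy, rfl⟩, rfl⟩
    exact (lt_min hx hy).trans_le (hfgh x y)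
  · have hempty : ∀ φ : ℝ → ℝ≥0∞, ⨆ x, φ x ≤ ENNReal.ofReal s →
        volume {x | ENNReal.ofReal s < φ x} = 0 := fun φ hφ => by
      have : {x | ENNReal.ofReal s < φ x} = ∅ :=
        eq_empty_iff_forall_notMem.2 fun x hx => not_le.2 hx ((le_iSup φ x).trans hφ)
      rw [this, measure_empty]
    rw [not_lt] at hs
    rw [hempty f hs, hempty g (hfg.symm.le.trans hs)]
    simp

theorem lintegral_rpow_mul_le_of_iSup_ne_top {t : ℝ} (ht₀ : 0 < t) (ht₁ : t < 1)
    {f g h : ℝ → ℝ≥0∞} (hf : Measurable f) (hg : Measurable g) (hh : Measurable h)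
    (hfT : ⨆ x, f x ≠ ∞) (hgT : ⨆ x, g x ≠ ∞)
    (hfgh : ∀ x y, f x ^ (1 - t) * g y ^ t ≤ h ((1 - t) • x + t • y)) :
    (∫⁻ x, f x) ^ (1 - t) * (∫⁻ x, g x) ^ t ≤ ∫⁻ x, h x := by
  have ht₁' : 0 < 1 - t := sub_pos.2 ht₁
  set c := ⨆ x, f x
  set d := ⨆ x, g x
  rcases eq_or_ne c 0 with hc | hc
  · simp [ENNReal.iSup_eq_zero.1 hc, ENNReal.zero_rpow_of_pos ht₁']
  rcases eq_or_ne d 0 with hd | hd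
  · simp [ENNReal.iSup_eq_zero.1 hd, ENNReal.zero_rpow_of_pos ht₀]
  -- rescale `f` and `g` to supremum `1`; `k` is the matching factor for `h`
  set k := c⁻¹ ^ (1 - t) * d⁻¹ ^ t
  have hk₀ : k ≠ 0 := mul_ne_zero (ENNReal.rpow_pos (by simpa) (by simpa)).ne'
    (ENNReal.rpow_pos (by simpa) (by simpa)).ne'
  have hkT : k ≠ ∞ := ENNReal.mul_ne_top (ENNReal.rpow_ne_top_of_nonneg ht₁'.le (by simpa))
    (ENNReal.rpow_ne_top_of_nonneg ht₀.le (by simpa))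
  have hmin := lintegral_add_le_of_min_le ht₀.le ht₁.le (hf.const_mul c⁻¹) (hg.const_mul d⁻¹)
    (hh.const_mul k)
    (by rw [← ENNReal.mul_iSup, ← ENNReal.mul_iSup, ENNReal.inv_mul_cancel hc hfT,
      ENNReal.inv_mul_cancel hd hgT])
    fun x y => by
      refine (ENNReal.min_le_rpow_one_sub_mul_rpow ht₀.le ht₁.le _ _).trans ?_
      rw [ENNReal.mul_rpow_of_nonneg _ _ ht₁'.le, ENNReal.mul_rpow_of_nonneg _ _ ht₀.le,
        mul_mul_mul_comm]
      exact mul_le_mul_right (hfgh x y) k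
  rw [lintegral_const_mul _ hf, lintegral_const_mul _ hg, lintegral_const_mul _ hh] at hmin
  have hamgm := ENNReal.rpow_one_sub_mul_rpow_le_add ht₀ ht₁ (c⁻¹ * ∫⁻ x, f x) (d⁻¹ * ∫⁻ x, g x)
  rw [ENNReal.mul_rpow_of_nonneg _ _ ht₁'.le, ENNReal.mul_rpow_of_nonneg _ _ ht₀.le,
    mul_mul_mul_comm] at hamgm
  exact (ENNReal.mul_le_mul_iff_right hk₀ hkT).1 (hamgm.trans hmin)

end Real

def PrekopaLeindler {E : Type*} [AddCommGroup E] [Module ℝ E] [MeasurableSpace E]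
    (μ : Measure E) : Prop :=
  ∀ ⦃t : ℝ⦄, 0 < t → t < 1 → ∀ ⦃f g h : E → ℝ≥0∞⦄, Measurable f → Measurable g → Measurable h →
    (∀ x y, f x ^ (1 - t) * g y ^ t ≤ h ((1 - t) • x + t • y)) →
    (∫⁻ x, f x ∂μ) ^ (1 - t) * (∫⁻ x, g x ∂μ) ^ t ≤ ∫⁻ x, h x ∂μ

theorem lintegral_iSup_min_natCast {α : Type*} [MeasurableSpace α] {μ : Measure α}
    {f : α → ℝ≥0∞} (hf : Measurable f) : ⨆ n : ℕ, ∫⁻ x, min (f x) n ∂μ = ∫⁻ x, f x ∂μ := by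
  rw [← lintegral_iSup (fun n => hf.min measurable_const)
    fun m n hmn x => min_le_min le_rfl (by exact_mod_cast hmn)]
  simp_rw [← inf_iSup_eq, ENNReal.iSup_natCast, inf_top_eq]

theorem Real.prekopaLeindler_volume : PrekopaLeindler (volume : Measure ℝ) := by
  intro t ht₀ ht₁ f g h hf hg hh hfgh
  have ht₁' : 0 < 1 - t := sub_pos.2 ht₁
  have htrunc : ∀ n : ℕ,
      (∫⁻ x, min (f x) n) ^ (1 - t) * (∫⁻ x, min (g x) n) ^ t ≤ ∫⁻ x, h x := fun n =>
    lintegral_rpow_mul_le_of_iSup_ne_top ht₀ ht₁ (hf.min measurable_const)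
      (hg.min measurable_const) hh
      (ne_top_of_le_ne_top (ENNReal.natCast_ne_top n) (iSup_le fun _ => min_le_right _ _))
      (ne_top_of_le_ne_top (ENNReal.natCast_ne_top n) (iSup_le fun _ => min_le_right _ _))
      fun x y => (mul_le_mul' (ENNReal.rpow_le_rpow (min_le_left _ _) ht₁'.le)
        (ENNReal.rpow_le_rpow (min_le_left _ _) ht₀.le)).trans (hfgh x y)
  have hmono : ∀ φ : ℝ → ℝ≥0∞, Monotone fun n : ℕ => ∫⁻ x, min (φ x) n := fun φ m n hmn =>
    lintegral_mono fun x => min_le_min le_rfl (by exact_mod_cast hmn)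
  rw [← lintegral_iSup_min_natCast hf, ← lintegral_iSup_min_natCast hg,
    ENNReal.iSup_rpow ht₁', ENNReal.iSup_rpow ht₀, ENNReal.iSup_mul]
  refine iSup_le fun m => ?_
  rw [ENNReal.mul_iSup]
  refine iSup_le fun n => (mul_le_mul' ?_ ?_).trans (htrunc (max m n))
  · exact ENNReal.rpow_le_rpow (hmono f (le_max_left m n)) ht₁'.le
  · exact ENNReal.rpow_le_rpow (hmono g (le_max_right m n)) ht₀.le

namespace PrekopaLeindler

variable {E F : Type*} [AddCommGroup E] [Module ℝ E] [MeasurableSpace E]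
  [AddCommGroup F] [Module ℝ F] [MeasurableSpace F]

theorem dirac (x : E) : PrekopaLeindler (Measure.dirac x) := by
  intro t _ _ f g h hf hg hh hfgh
  simpa [lintegral_dirac' x hf, lintegral_dirac' x hg, lintegral_dirac' x hh, ← add_smul]
    using hfgh x x

theorem map {μ : Measure E} {ν : Measure F} (hμ : PrekopaLeindler μ) (e : E →ₗ[ℝ] F)
    (he : MeasurePreserving e μ ν) : PrekopaLeindler ν := by
  intro t ht₀ ht₁ f g h hf hg hh hfgh
  rw [← he.lintegral_comp hf, ← he.lintegral_comp hg, ← he.lintegral_comp hh]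
  refine hμ ht₀ ht₁ (hf.comp he.measurable) (hg.comp he.measurable) (hh.comp he.measurable)
    fun x y => ?_
  simpa only [Function.comp_apply, map_add, map_smul] using hfgh (e x) (e y)

theorem prod {μ : Measure E} {ν : Measure F} [SFinite ν] (hμ : PrekopaLeindler μ)
    (hν : PrekopaLeindler ν) : PrekopaLeindler (μ.prod ν) := by
  intro t ht₀ ht₁ f g h hf hg hh hfgh
  rw [lintegral_prod _ hf.aemeasurable, lintegral_prod _ hg.aemeasurable,
    lintegral_prod _ hh.aemeasurable]
  refine hμ ht₀ ht₁ hf.lintegral_prod_right' hg.lintegral_prod_right' hh.lintegral_prod_right'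
    fun a b => hν ht₀ ht₁ (hf.comp measurable_prodMk_left) (hg.comp measurable_prodMk_left)
      (hh.comp measurable_prodMk_left) fun z w => hfgh (a, z) (b, w)

theorem integral_rpow_mul_le {μ : Measure E} (hμ : PrekopaLeindler μ) {t : ℝ} (ht₀ : 0 < t)
    (ht₁ : t < 1) {f g h : E → ℝ} (hf : Measurable f) (hg : Measurable g) (hh : Measurable h)
    (hf₀ : 0 ≤ f) (hg₀ : 0 ≤ g) (hh₀ : 0 ≤ h)
    (hfi : Integrable f μ) (hgi : Integrable g μ) (hhi : Integrable h μ)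
    (hfgh : ∀ x y, f x ^ (1 - t) * g y ^ t ≤ h ((1 - t) • x + t • y)) :
    (∫ x, f x ∂μ) ^ (1 - t) * (∫ x, g x ∂μ) ^ t ≤ ∫ x, h x ∂μ := by
  have ht₁' : 0 ≤ 1 - t := sub_nonneg.2 ht₁.le
  have key := hμ ht₀ ht₁ hf.ennreal_ofReal hg.ennreal_ofReal hh.ennreal_ofReal fun x y => by
    rw [ENNReal.ofReal_rpow_of_nonneg (hf₀ x) ht₁', ENNReal.ofReal_rpow_of_nonneg (hg₀ y) ht₀.le,
      ← ENNReal.ofReal_mul (rpow_nonneg (hf₀ x) _)]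
    exact ENNReal.ofReal_le_ofReal (hfgh x y)
  rw [← ofReal_integral_eq_lintegral_ofReal hfi (ae_of_all _ hf₀),
    ← ofReal_integral_eq_lintegral_ofReal hgi (ae_of_all _ hg₀),
    ← ofReal_integral_eq_lintegral_ofReal hhi (ae_of_all _ hh₀),
    ENNReal.ofReal_rpow_of_nonneg (integral_nonneg hf₀) ht₁',
    ENNReal.ofReal_rpow_of_nonneg (integral_nonneg hg₀) ht₀.le,
    ← ENNReal.ofReal_mul (rpow_nonneg (integral_nonneg hf₀) _)] at key
  exact (ENNReal.ofReal_le_ofReal_iff (integral_nonneg hh₀)).1 key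

theorem volume_pi_fin : ∀ n : ℕ, PrekopaLeindler (volume : Measure (Fin n → ℝ))
  | 0 => by
    rw [Measure.volume_pi_eq_dirac]
    exact dirac _
  | n + 1 => by
    refine (Real.prekopaLeindler_volume.prod (volume_pi_fin n)).map
      (Fin.consLinearEquiv ℝ fun _ : Fin (n + 1) => ℝ).toLinearMap ?_
    rw [← Measure.volume_eq_prod]
    convert (volume_preserving_piFinSuccAbove (fun _ : Fin (n + 1) => ℝ) 0).symm using 1
    · rfl
    · ext p
      simp

end PrekopaLeindler

theorem prekopaLeindler_volume (E : Type*) [NormedAddCommGroup E] [InnerProductSpace ℝ E]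
    [FiniteDimensional ℝ E] [MeasurableSpace E] [BorelSpace E] :
    PrekopaLeindler (volume : Measure E) := by
  set b := stdOrthonormalBasis ℝ E
  exact (PrekopaLeindler.volume_pi_fin _).map
    (b.repr.symm.toLinearEquiv.toLinearMap ∘ₗ (WithLp.linearEquiv 2 ℝ _).symm.toLinearMap)
    (b.measurePreserving_repr_symm.comp (PiLp.volume_preserving_toLp _))

theorem convexOn_neg_log_integral_exp_neg {F E : Type*} [NormedAddCommGroup F]
    [InnerProductSpace ℝ F] [FiniteDimensional ℝ F] [MeasurableSpace F] [BorelSpace F]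
    [AddCommGroup E] [Module ℝ E] {φ : F × E → ℝ} (hφ : ConvexOn ℝ univ φ)
    (hint : ∀ u, Integrable fun q => exp (-φ (q, u))) :
    ConvexOn ℝ univ fun u => -log (∫ q, exp (-φ (q, u))) := by
  have hmeas : ∀ u, Measurable fun q => exp (-φ (q, u)) := by
    intro u
    have hsec : ConvexOn ℝ univ fun q => φ (q, u) :=
      ⟨convex_univ, fun x _ y _ a b ha hb hab => by
        simpa [← add_smul, hab] using hφ.2 (mem_univ (x, u)) (mem_univ (y, u)) ha hb hab⟩
    exact (continuousOn_univ.1 (hsec.continuousOn isOpen_univ)).neg.rexp.measurable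
  have hpos : ∀ u, 0 < ∫ q, exp (-φ (q, u)) := fun u => integral_exp_pos (hint u)
  refine convexOn_iff_forall_pos.2 ⟨convex_univ, fun x _ y _ a t ha ht hat => ?_⟩
  obtain rfl : a = 1 - t := eq_sub_of_add_eq hat
  have hPL := (prekopaLeindler_volume F).integral_rpow_mul_le ht (by linarith) (hmeas x)
    (hmeas y) (hmeas ((1 - t) • x + t • y)) (fun _ => (exp_pos _).le) (fun _ => (exp_pos _).le)
    (fun _ => (exp_pos _).le) (hint x) (hint y) (hint _) fun q r => by
      rw [← exp_mul, ← exp_mul, ← exp_add, exp_le_exp]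
      have := hφ.2 (mem_univ (q, x)) (mem_univ (r, y)) ha.le ht.le hat
      simp only [Prod.smul_mk, Prod.mk_add_mk, smul_eq_mul] at this
      linarith
  have hx := rpow_pos_of_pos (hpos x) (1 - t)
  have hy := rpow_pos_of_pos (hpos y) t
  have hlog := log_le_log (mul_pos hx hy) hPL
  rw [log_mul hx.ne' hy.ne', log_rpow (hpos x), log_rpow (hpos y)] at hlog
  simp only [smul_eq_mul]
  linarith

theorem G_convex_general (d : ℕ) (η : ℝ) (g : Euc d → ℝ)
    (hη : 0 < η)
    (hgconv : ConvexOn ℝ Set.univ g)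
    (hZ : ∀ u : Euc d, Integrable (fun q : Euc d => Real.exp (-‖q - u‖ ^ 2 / (4 * η) - g q))) :
    ConvexOn ℝ Set.univ (fun y : Euc d => -Real.log (Zfun d η g y)) := by
  have hsq : ConvexOn ℝ univ fun p : Euc d × Euc d => ‖p.1 - p.2‖ ^ 2 :=
    ((convexOn_norm convex_univ).pow (fun _ _ => norm_nonneg _) 2 :
      ConvexOn ℝ univ fun x : Euc d => ‖x‖ ^ 2).comp_linearMap
      (LinearMap.fst ℝ (Euc d) (Euc d) - LinearMap.snd ℝ (Euc d) (Euc d))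
  have hφ : ConvexOn ℝ univ fun p : Euc d × Euc d => (4 * η)⁻¹ * ‖p.1 - p.2‖ ^ 2 + g p.1 :=
    (hsq.smul (by positivity)).add (hgconv.comp_linearMap (LinearMap.fst ℝ _ _))
  have hexp : ∀ u q : Euc d,
      -((4 * η)⁻¹ * ‖q - u‖ ^ 2 + g q) = -‖q - u‖ ^ 2 / (4 * η) - g q := fun u q => by ring
  refine (convexOn_neg_log_integral_exp_neg hφ fun u => ?_).congr fun u _ => ?_
  · simpa only [hexp] using hZ u
  · simp only [Zfun, hexp]

/-- if `g` is convex and the smoothed partition function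
`Z(u) = ∫ exp(−‖q−u‖²/(4η) − g(q)) dq` is finite everywhere, then `Z` is log-concave,
i.e. `G = −log Z` is convex on `ℝ^d`. -/
theorem G_convex (d : ℕ) (η : ℝ) (g : Euc d → ℝ)
    (hd : 1 ≤ d) (hη : 0 < η)
    (hgconv : ConvexOn ℝ Set.univ g)
    (hZ : ∀ u : Euc d, Integrable (fun q : Euc d => Real.exp (-‖q - u‖ ^ 2 / (4 * η) - g q))) :
    ConvexOn ℝ Set.univ (fun y : Euc d => -Real.log (Zfun d η g y)) :=
  G_convex_general d η g hη hgconv hZ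
end
end

section
/- Suppose f is L-smooth and g is convex and M-Lipschitz, and let the step size satisfy η < 1/(16L). Then for any x₁, x₂ ∈ ℝ^d, the proposal distributions satisfy d_TV(P_{x₁}, P_{x₂}) ≤ ‖x₁ − x₂‖/√η. -/
open MeasureTheory Real
open scoped ENNReal RealInnerProductSpace

noncomputable section

/-!
Write `q_u(y) = exp (-‖y - u‖² / (4η) - g y)`, `Z(u) = ∫ q_u` and `p_u = q_u / Z(u)`. Then `P_x`
is `p_u` for `u = x - η ∇f(x)`, and `‖u₁ - u₂‖ ≤ (1 + ηL)‖x₁ - x₂‖ ≤ √2 ‖x₁ - x₂‖`, so it suffices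
to show `d_TV(p_u, p_v) ≤ ‖u - v‖ / √(2η)`.

As `g` is convex, `q_a(x) q_b(y) ≤ q_{(a+b)/2}((x+y)/2)²`, so the Prékopa–Leindler inequality
(with parameter `1/2`: on `ℝ` it is the Brunn–Minkowski inequality `|A| + |B| ≤ 2|(A+B)/2|`
integrated over level sets, and it tensorizes) makes `Z` log-concave. By the parallelogram law
`q_u² = e^{‖u-v‖²/(2η)} q_w q_v` with `w = 2u - v`, hence the χ²-bound
`∫ p_u² / p_v = e^{‖u-v‖²/(2η)} Z(w) Z(v) / Z(u)² ≤ e^{‖u-v‖²/(2η)}`, and by Cauchy–Schwarz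
`2 d_TV(p_u, p_v) = ‖p_u - p_v‖₁ ≤ (e^{‖u-v‖²/(2η)} - 1)^{1/2}`.
-/

open Set
open scoped NNReal

lemma ENNReal.four_mul_le_sq_add (a b : ℝ≥0∞) : 4 * a * b ≤ (a + b) ^ 2 := by
  rcases eq_or_ne a ⊤ with rfl | ha
  · rcases eq_or_ne b 0 with rfl | hb <;> simp [*, pow_two]
  rcases eq_or_ne b ⊤ with rfl | hb
  · rcases eq_or_ne a 0 with rfl | ha' <;> simp [*, pow_two]
  lift a to ℝ≥0 using ha
  lift b to ℝ≥0 using hb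
  exact_mod_cast _root_.four_mul_le_sq_add a b

lemma ENNReal.iSup_min_natCast (a : ℝ≥0∞) : ⨆ n : ℕ, min a n = a := by
  rw [← inf_iSup_eq, ENNReal.iSup_natCast, inf_top_eq]

lemma lintegral_eq_lintegral_measure_ofReal_lt {α : Type*} [MeasurableSpace α] (μ : Measure α)
    {φ : α → ℝ≥0∞} (hφ : Measurable φ) (hφ_ne_top : ∀ x, φ x ≠ ⊤) :
    ∫⁻ x, φ x ∂μ = ∫⁻ t in Ioi (0 : ℝ), μ {x | ENNReal.ofReal t < φ x} := by
  rw [lintegral_congr fun x => (ENNReal.ofReal_toReal (hφ_ne_top x)).symm,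
    lintegral_eq_lintegral_meas_lt μ (Filter.Eventually.of_forall fun x => ENNReal.toReal_nonneg)
      hφ.ennreal_toReal.aemeasurable]
  refine setLIntegral_congr_fun measurableSet_Ioi fun t ht => ?_
  congr! 3 with x
  exact (ENNReal.ofReal_lt_iff_lt_toReal ht.le (hφ_ne_top x)).symm

lemma midpoint_eq_homothety {V : Type*} [AddCommGroup V] [Module ℝ V] (c : V) :
    midpoint ℝ c = AffineMap.homothety c (⅟2 : ℝ) := by
  ext x; rw [AffineMap.homothety_eq_lineMap]; rfl

lemma volume_image_midpoint (c : ℝ) (K : Set ℝ) :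
    volume (midpoint ℝ c '' K) = volume K / 2 := by
  rw [midpoint_eq_homothety, Measure.addHaar_image_homothety, Module.finrank_self, pow_one,
    invOf_eq_inv, abs_of_pos (by norm_num), ENNReal.ofReal_inv_of_pos two_pos,
    ENNReal.div_eq_inv_mul]
  norm_num

lemma volume_add_volume_le_two_mul_volume_image2_midpoint {K₁ K₂ : Set ℝ} (h₁ : IsCompact K₁)
    (h₂ : IsCompact K₂) (ne₁ : K₁.Nonempty) (ne₂ : K₂.Nonempty) :
    volume K₁ + volume K₂ ≤ 2 * volume (image2 (midpoint ℝ) K₁ K₂) := by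
  set m₁ := sSup K₁
  set m₂ := sInf K₂
  -- `(K₁ + min K₂) / 2` and `(max K₁ + K₂) / 2` lie in the midpoint set and meet in one point
  set S₁ := midpoint ℝ m₂ '' K₁
  set S₂ := midpoint ℝ m₁ '' K₂
  have hS : S₁ ∪ S₂ ⊆ image2 (midpoint ℝ) K₁ K₂ := by
    rintro _ (⟨x, hx, rfl⟩ | ⟨y, hy, rfl⟩)
    · exact ⟨x, hx, m₂, h₂.sInf_mem ne₂, midpoint_comm _ _⟩
    · exact ⟨m₁, h₁.sSup_mem ne₁, y, hy, rfl⟩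
  have hinter : S₁ ∩ S₂ ⊆ {midpoint ℝ m₁ m₂} := by
    rintro _ ⟨⟨x, hx, rfl⟩, ⟨y, hy, hxy⟩⟩
    have hx' : x ≤ m₁ := le_csSup h₁.bddAbove hx
    have hy' : m₂ ≤ y := csInf_le h₂.bddBelow hy
    simp only [mem_singleton_iff, midpoint_eq_smul_add, invOf_eq_inv, smul_eq_mul] at hxy ⊢
    linarith
  have hS₂ : MeasurableSet S₂ := by
    refine (h₂.image ?_).isClosed.measurableSet
    rw [midpoint_eq_homothety]
    exact AffineMap.homothety_continuous _ _
  calc volume K₁ + volume K₂ = 2 * (volume S₁ + volume S₂) := by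
        rw [volume_image_midpoint, volume_image_midpoint, mul_add,
          ENNReal.mul_div_cancel two_ne_zero ENNReal.ofNat_ne_top,
          ENNReal.mul_div_cancel two_ne_zero ENNReal.ofNat_ne_top]
    _ = 2 * volume (S₁ ∪ S₂) := by
        rw [← measure_union_add_inter S₁ hS₂, measure_mono_null hinter Real.volume_singleton,
          add_zero]
    _ ≤ 2 * volume (image2 (midpoint ℝ) K₁ K₂) := by gcongr

lemma volume_add_volume_le_two_mul_of_midpoint_mem {A B C : Set ℝ} (hA : MeasurableSet A)
    (hB : MeasurableSet B) (neA : A.Nonempty) (neB : B.Nonempty)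
    (hC : ∀ x ∈ A, ∀ y ∈ B, midpoint ℝ x y ∈ C) :
    volume A + volume B ≤ 2 * volume C := by
  obtain ⟨a, ha⟩ := neA
  obtain ⟨b, hb⟩ := neB
  rw [hA.measure_eq_iSup_isCompact, hB.measure_eq_iSup_isCompact]
  simp only [iSup_and']
  refine ENNReal.biSup_add_biSup_le' ⟨∅, empty_subset _, isCompact_empty⟩
    ⟨∅, empty_subset _, isCompact_empty⟩ fun K₁ ⟨hK₁A, hK₁⟩ K₂ ⟨hK₂B, hK₂⟩ => ?_
  calc volume K₁ + volume K₂ ≤ volume (insert a K₁) + volume (insert b K₂) := by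
        gcongr <;> exact subset_insert _ _
    _ ≤ 2 * volume (image2 (midpoint ℝ) (insert a K₁) (insert b K₂)) :=
        volume_add_volume_le_two_mul_volume_image2_midpoint (hK₁.insert a) (hK₂.insert b)
          (insert_nonempty _ _) (insert_nonempty _ _)
    _ ≤ 2 * volume C := by
        gcongr
        rintro _ ⟨x, hx, y, hy, rfl⟩
        exact hC x (insert_subset ha hK₁A hx) y (insert_subset hb hK₂B hy)

/-- The Prékopa–Leindler inequality with parameter `1/2`, in multiplicative form. -/
def MidpointPrekopaLeindler {E : Type*} [AddCommGroup E] [Module ℝ E] [MeasurableSpace E]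
    (μ : Measure E) : Prop :=
  ∀ f g h : E → ℝ≥0∞, Measurable f → Measurable g → Measurable h →
    (∀ x y, f x * g y ≤ h (midpoint ℝ x y) ^ 2) →
    (∫⁻ x, f x ∂μ) * (∫⁻ y, g y ∂μ) ≤ (∫⁻ z, h z ∂μ) ^ 2

section OneDimensional

variable {f g h : ℝ → ℝ≥0∞} {s : ℝ≥0∞}

lemma volume_lt_add_volume_lt_le (hf : Measurable f) (hg : Measurable g)
    (hfs : ⨆ x, f x = s) (hgs : ⨆ y, g y = s)
    (hfgh : ∀ x y, f x * g y ≤ h (midpoint ℝ x y) ^ 2) (τ : ℝ≥0∞) :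
    volume {x | τ < f x} + volume {y | τ < g y} ≤ 2 * volume {z | τ < min (h z) s} := by
  by_cases hτ : τ < s
  · obtain ⟨x₀, hx₀⟩ := lt_iSup_iff.mp (hfs ▸ hτ)
    obtain ⟨y₀, hy₀⟩ := lt_iSup_iff.mp (hgs ▸ hτ)
    refine volume_add_volume_le_two_mul_of_midpoint_mem (hf measurableSet_Ioi)
      (hg measurableSet_Ioi) ⟨x₀, hx₀⟩ ⟨y₀, hy₀⟩ fun x hx y hy => lt_min ?_ hτ
    refine lt_of_pow_lt_pow_left' 2 ((pow_two τ).trans_lt ?_ |>.trans_le (hfgh x y))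
    exact ENNReal.mul_lt_mul hx hy
  · have hempty : ∀ φ : ℝ → ℝ≥0∞, ⨆ x, φ x = s → {x | τ < φ x} = ∅ := fun φ hφ =>
      eq_empty_of_forall_notMem fun x hx => hτ (hx.trans_le (hφ ▸ le_iSup φ x))
    simp [hempty f hfs, hempty g hgs]

lemma lintegral_add_lintegral_le_of_iSup_eq (hf : Measurable f) (hg : Measurable g)
    (hh : Measurable h) (hs : s ≠ ⊤) (hfs : ⨆ x, f x = s) (hgs : ⨆ y, g y = s)
    (hfgh : ∀ x y, f x * g y ≤ h (midpoint ℝ x y) ^ 2) :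
    (∫⁻ x, f x) + ∫⁻ y, g y ≤ 2 * ∫⁻ z, h z := by
  have hle : ∀ φ : ℝ → ℝ≥0∞, ⨆ x, φ x = s → ∀ x, φ x ≠ ⊤ := fun φ hφ x =>
    ne_top_of_le_ne_top hs (hφ ▸ le_iSup φ x)
  have hmeas : ∀ φ : ℝ → ℝ≥0∞, Measurable fun t : ℝ => volume {x | ENNReal.ofReal t < φ x} :=
    fun φ => Antitone.measurable fun t₁ t₂ ht => measure_mono fun x hx =>
      (ENNReal.ofReal_le_ofReal ht).trans_lt hx
  rw [lintegral_eq_lintegral_measure_ofReal_lt _ hf (hle f hfs),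
    lintegral_eq_lintegral_measure_ofReal_lt _ hg (hle g hgs), ← lintegral_add_left (hmeas f)]
  calc ∫⁻ t in Ioi 0, volume {x | ENNReal.ofReal t < f x} + volume {y | ENNReal.ofReal t < g y}
      ≤ ∫⁻ t in Ioi 0, 2 * volume {z | ENNReal.ofReal t < min (h z) s} :=
        lintegral_mono fun t => volume_lt_add_volume_lt_le hf hg hfs hgs hfgh _
    _ = 2 * ∫⁻ z, min (h z) s := by
        rw [lintegral_const_mul _ (hmeas _), lintegral_eq_lintegral_measure_ofReal_lt _
          (hh.min measurable_const) fun z => ne_top_of_le_ne_top hs (min_le_right _ _)]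
    _ ≤ 2 * ∫⁻ z, h z := by gcongr with z; exact min_le_left _ _

lemma lintegral_mul_lintegral_le_sq_of_iSup_eq (hf : Measurable f) (hg : Measurable g)
    (hh : Measurable h) (hs : s ≠ ⊤) (hfs : ⨆ x, f x = s) (hgs : ⨆ y, g y = s)
    (hfgh : ∀ x y, f x * g y ≤ h (midpoint ℝ x y) ^ 2) :
    (∫⁻ x, f x) * (∫⁻ y, g y) ≤ (∫⁻ z, h z) ^ 2 := by
  refine (ENNReal.mul_le_mul_iff_right (a := 4) (by norm_num) (by norm_num)).mp ?_
  calc 4 * ((∫⁻ x, f x) * ∫⁻ y, g y) ≤ ((∫⁻ x, f x) + ∫⁻ y, g y) ^ 2 := by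
        rw [← mul_assoc]; exact ENNReal.four_mul_le_sq_add _ _
    _ ≤ (2 * ∫⁻ z, h z) ^ 2 := by
        gcongr; exact lintegral_add_lintegral_le_of_iSup_eq hf hg hh hs hfs hgs hfgh
    _ = 4 * (∫⁻ z, h z) ^ 2 := by rw [mul_pow]; norm_num

lemma lintegral_mul_lintegral_le_sq_of_iSup_ne_top (hf : Measurable f) (hg : Measurable g)
    (hh : Measurable h) (hf_top : ⨆ x, f x ≠ ⊤) (hg_top : ⨆ y, g y ≠ ⊤)
    (hfgh : ∀ x y, f x * g y ≤ h (midpoint ℝ x y) ^ 2) :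
    (∫⁻ x, f x) * (∫⁻ y, g y) ≤ (∫⁻ z, h z) ^ 2 := by
  obtain ⟨a, ha⟩ : ∃ a : ℝ≥0, (a : ℝ≥0∞) = ⨆ x, f x := ⟨_, ENNReal.coe_toNNReal hf_top⟩
  obtain ⟨b, hb⟩ : ∃ b : ℝ≥0, (b : ℝ≥0∞) = ⨆ y, g y := ⟨_, ENNReal.coe_toNNReal hg_top⟩
  rcases eq_or_ne a 0 with rfl | ha₀
  · have : f = 0 := funext fun x => nonpos_iff_eq_zero.mp (by simpa [← ha] using le_iSup f x)
    simp [this]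
  rcases eq_or_ne b 0 with rfl | hb₀
  · have : g = 0 := funext fun y => nonpos_iff_eq_zero.mp (by simpa [← hb] using le_iSup g y)
    simp [this]
  -- rescale `f` by `c` and `g` by `c⁻¹` so that both have supremum `c * a = c⁻¹ * b`
  set c := NNReal.sqrt (b / a)
  have hc₀ : c ≠ 0 := by simp [c, ha₀, hb₀]
  have hc : c * a = c⁻¹ * b := by
    rw [eq_inv_mul_iff_mul_eq₀ hc₀, ← mul_assoc, NNReal.mul_self_sqrt, div_mul_cancel₀ _ ha₀]
  have key := lintegral_mul_lintegral_le_sq_of_iSup_eq (f := fun x => c * f x)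
    (g := fun y => (c⁻¹ : ℝ≥0) * g y) (hf.const_mul _) (hg.const_mul _) hh
    ENNReal.coe_ne_top (by rw [← ENNReal.mul_iSup, ← ha]; rfl)
    (by rw [← ENNReal.mul_iSup, ← hb]; exact_mod_cast hc.symm) fun x y => ?_
  · rwa [lintegral_const_mul _ hf, lintegral_const_mul _ hg, mul_mul_mul_comm,
      ← ENNReal.coe_mul, mul_inv_cancel₀ hc₀, ENNReal.coe_one, one_mul] at key
  · rw [mul_mul_mul_comm, ← ENNReal.coe_mul, mul_inv_cancel₀ hc₀, ENNReal.coe_one, one_mul]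
    exact hfgh x y

end OneDimensional

theorem midpointPrekopaLeindler_volume_real : MidpointPrekopaLeindler (volume : Measure ℝ) := by
  intro f g h hf hg hh hfgh
  have htrunc (n : ℕ) : (∫⁻ x, min (f x) n) * (∫⁻ y, min (g y) n) ≤ (∫⁻ z, h z) ^ 2 :=
    lintegral_mul_lintegral_le_sq_of_iSup_ne_top (hf.min measurable_const)
      (hg.min measurable_const) hh
      (ne_top_of_le_ne_top (ENNReal.natCast_ne_top n) (iSup_le fun _ => min_le_right _ _))
      (ne_top_of_le_ne_top (ENNReal.natCast_ne_top n) (iSup_le fun _ => min_le_right _ _))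
      fun x y => (mul_le_mul' (min_le_left _ _) (min_le_left _ _)).trans (hfgh x y)
  have hmono {φ : ℝ → ℝ≥0∞} : Monotone fun (n : ℕ) x => min (φ x) n :=
    fun m n hmn x => min_le_min le_rfl (Nat.cast_le.mpr hmn)
  have hlim {φ : ℝ → ℝ≥0∞} (hφ : Measurable φ) : ∫⁻ x, φ x = ⨆ n : ℕ, ∫⁻ x, min (φ x) n := by
    rw [← lintegral_iSup (fun n => hφ.min measurable_const) hmono]
    simp only [ENNReal.iSup_min_natCast]
  rw [hlim hf, hlim hg, ENNReal.iSup_mul]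
  refine iSup_le fun m => ?_
  rw [ENNReal.mul_iSup]
  refine iSup_le fun n => ?_
  calc (∫⁻ x, min (f x) m) * (∫⁻ y, min (g y) n)
      ≤ (∫⁻ x, min (f x) (max m n : ℕ)) * (∫⁻ y, min (g y) (max m n : ℕ)) :=
        mul_le_mul' (lintegral_mono (hmono (le_max_left m n)))
          (lintegral_mono (hmono (le_max_right m n)))
    _ ≤ (∫⁻ z, h z) ^ 2 := htrunc _

section Tensorization

variable {E F : Type*} [AddCommGroup E] [Module ℝ E] [MeasurableSpace E]
  [AddCommGroup F] [Module ℝ F] [MeasurableSpace F]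

theorem midpointPrekopaLeindler_of_subsingleton [Subsingleton E] (μ : Measure E) :
    MidpointPrekopaLeindler μ := by
  intro f g h _ _ _ hfgh
  have hconst (φ : E → ℝ≥0∞) : ∫⁻ x, φ x ∂μ = φ 0 * μ univ := by
    rw [← lintegral_const]; exact lintegral_congr fun x => by rw [Subsingleton.elim x 0]
  rw [hconst f, hconst g, hconst h, mul_mul_mul_comm, ← pow_two, mul_pow]
  gcongr
  simpa using hfgh 0 0

theorem MidpointPrekopaLeindler.prod {μ : Measure E} {ν : Measure F} [SFinite ν]
    (hμ : MidpointPrekopaLeindler μ) (hν : MidpointPrekopaLeindler ν) :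
    MidpointPrekopaLeindler (μ.prod ν) := by
  intro f g h hf hg hh hfgh
  rw [lintegral_prod _ hf.aemeasurable, lintegral_prod _ hg.aemeasurable,
    lintegral_prod _ hh.aemeasurable]
  refine hμ _ _ _ hf.lintegral_prod_right' hg.lintegral_prod_right' hh.lintegral_prod_right'
    fun x x' => hν _ _ _ (hf.comp measurable_prodMk_left) (hg.comp measurable_prodMk_left)
      (hh.comp measurable_prodMk_left) fun y y' => ?_
  simpa [midpoint_eq_smul_add] using hfgh (x, y) (x', y')

theorem MidpointPrekopaLeindler.of_measurePreserving {μ : Measure E} {ν : Measure F}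
    (hν : MidpointPrekopaLeindler ν) {e : F → E} (he : MeasurePreserving e ν μ)
    (he_mid : ∀ x y, e (midpoint ℝ x y) = midpoint ℝ (e x) (e y)) :
    MidpointPrekopaLeindler μ := by
  intro f g h hf hg hh hfgh
  rw [← he.lintegral_comp hf, ← he.lintegral_comp hg, ← he.lintegral_comp hh]
  refine hν _ _ _ (hf.comp he.measurable) (hg.comp he.measurable) (hh.comp he.measurable)
    fun x y => ?_
  simpa only [Function.comp_apply, he_mid] using hfgh (e x) (e y)

end Tensorization

theorem midpointPrekopaLeindler_volume_pi :
    ∀ d : ℕ, MidpointPrekopaLeindler (volume : Measure (Fin d → ℝ))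
  | 0 => midpointPrekopaLeindler_of_subsingleton _
  | d + 1 => by
    let e := MeasurableEquiv.piFinSuccAbove (fun _ : Fin (d + 1) => ℝ) 0
    have he : MeasurePreserving e.symm (volume.prod volume) volume := by
      simpa [volume_pi] using (measurePreserving_piFinSuccAbove (fun _ => volume) 0).symm
    refine (midpointPrekopaLeindler_volume_real.prod (midpointPrekopaLeindler_volume_pi d))
      |>.of_measurePreserving he fun x y => ?_
    ext i
    refine Fin.cases ?_ (fun j => ?_) i <;>
      simp [e, midpoint_eq_smul_add, mul_add]

theorem midpointPrekopaLeindler_volume_euclideanSpace (d : ℕ) :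
    MidpointPrekopaLeindler (volume : Measure (Euc d)) :=
  (midpointPrekopaLeindler_volume_pi d).of_measurePreserving (PiLp.volume_preserving_toLp _)
    fun x y => by ext i; simp [midpoint_eq_smul_add, mul_add]

theorem integral_abs_sub_le_sqrt_chiSq {α : Type*} [MeasurableSpace α] {μ : Measure α}
    {p q : α → ℝ} (hp : Integrable p μ) (hq : Integrable q μ) (hq_pos : ∀ x, 0 < q x)
    (hpq : Integrable (fun x => p x ^ 2 / q x) μ) (hp_one : ∫ x, p x ∂μ = 1)
    (hq_one : ∫ x, q x ∂μ = 1) :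
    ∫ x, |p x - q x| ∂μ ≤ sqrt (∫ x, p x ^ 2 / q x ∂μ - 1) := by
  -- Cauchy–Schwarz for `|p - q| = √q · (|p - q| / √q)`
  have hsq_sqrt (x : α) : sqrt (q x) ^ 2 = q x := sq_sqrt (hq_pos x).le
  have hsq_ratio (x : α) : (|p x - q x| / sqrt (q x)) ^ 2 = p x ^ 2 / q x - 2 * p x + q x := by
    have := (hq_pos x).ne'
    rw [div_pow, sq_abs, hsq_sqrt]
    field_simp
    ring
  have hprod (x : α) : sqrt (q x) * (|p x - q x| / sqrt (q x)) = |p x - q x| :=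
    mul_div_cancel₀ _ (sqrt_pos.mpr (hq_pos x)).ne'
  have hint : Integrable (fun x => p x ^ 2 / q x - 2 * p x + q x) μ :=
    (hpq.sub (hp.const_mul 2)).add hq
  have hp_meas := hp.aemeasurable
  have hq_meas := hq.aemeasurable
  have hsqrt_mem : MemLp (fun x => sqrt (q x)) (ENNReal.ofReal 2) μ := by
    rw [ENNReal.ofReal_ofNat, memLp_two_iff_integrable_sq (by fun_prop)]
    simpa only [hsq_sqrt] using hq
  have hratio_mem : MemLp (fun x => |p x - q x| / sqrt (q x)) (ENNReal.ofReal 2) μ := by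
    rw [ENNReal.ofReal_ofNat,
      memLp_two_iff_integrable_sq (by fun_prop : AEMeasurable _ μ).aestronglyMeasurable]
    simpa only [hsq_ratio] using hint
  have key := integral_mul_le_Lp_mul_Lq_of_nonneg Real.HolderConjugate.two_two
    (Filter.Eventually.of_forall fun x => sqrt_nonneg _)
    (Filter.Eventually.of_forall fun x => div_nonneg (abs_nonneg _) (sqrt_nonneg _))
    hsqrt_mem hratio_mem
  simp only [hprod, ← sqrt_eq_rpow, Real.rpow_two, hsq_sqrt, hsq_ratio] at key
  rwa [hq_one, sqrt_one, one_mul, integral_add (f := fun x => p x ^ 2 / q x - 2 * p x)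
    (hpq.sub (hp.const_mul 2)) hq, integral_sub hpq (hp.const_mul 2), integral_const_mul, hp_one,
    hq_one, show ∀ a : ℝ, a - 2 * 1 + 1 = a - 1 from fun a => by ring] at key

section TotalVariation

variable {α : Type*} [MeasurableSpace α] {μ : Measure α}

lemma abs_setIntegral_le_half_integral_abs {r : α → ℝ} (hr : Integrable r μ)
    (hr_zero : ∫ x, r x ∂μ = 0) {A : Set α} (hA : MeasurableSet A) :
    |∫ x in A, r x ∂μ| ≤ (1 / 2) * ∫ x, |r x| ∂μ := by
  have hsum := integral_add_compl hA hr
  have hsum_abs := integral_add_compl hA hr.abs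
  have hA_le := abs_integral_le_integral_abs (f := r) (μ := μ.restrict A)
  have hAc_le := abs_integral_le_integral_abs (f := r) (μ := μ.restrict Aᶜ)
  rw [hr_zero, add_eq_zero_iff_eq_neg] at hsum
  rw [hsum, abs_neg] at hA_le ⊢
  linarith

lemma integral_abs_sub_le_two {p q : α → ℝ} (hp : Integrable p μ) (hq : Integrable q μ)
    (hp_nonneg : 0 ≤ᵐ[μ] p) (hq_nonneg : 0 ≤ᵐ[μ] q) (hp_one : ∫ x, p x ∂μ = 1)
    (hq_one : ∫ x, q x ∂μ = 1) : ∫ x, |p x - q x| ∂μ ≤ 2 := by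
  calc ∫ x, |p x - q x| ∂μ ≤ ∫ x, p x + q x ∂μ := by
        refine integral_mono_ae (hp.sub hq).abs (hp.add hq) ?_
        filter_upwards [hp_nonneg, hq_nonneg] with x hpx hqx
        exact abs_sub_le_iff.mpr ⟨by simp at hqx; linarith, by simp at hpx; linarith⟩
    _ = 2 := by rw [integral_add hp hq, hp_one, hq_one]; norm_num

theorem tvDist_withDensity_le {p q : α → ℝ} (hp : Integrable p μ) (hq : Integrable q μ)
    (hp_nonneg : 0 ≤ᵐ[μ] p) (hq_nonneg : 0 ≤ᵐ[μ] q) (hpq : ∫ x, p x ∂μ = ∫ x, q x ∂μ) :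
    tvDist (μ.withDensity fun x => ENNReal.ofReal (p x))
        (μ.withDensity fun x => ENNReal.ofReal (q x)) ≤ (1 / 2) * ∫ x, |p x - q x| ∂μ := by
  have hmeasure {φ : α → ℝ} (hφ : Integrable φ μ) (hφ_nonneg : 0 ≤ᵐ[μ] φ) {A : Set α}
      (hA : MeasurableSet A) :
      ((μ.withDensity fun x => ENNReal.ofReal (φ x)) A).toReal = ∫ x in A, φ x ∂μ := by
    rw [withDensity_apply _ hA, ← ofReal_integral_eq_lintegral_ofReal hφ.restrict
      (ae_restrict_of_ae hφ_nonneg), ENNReal.toReal_ofReal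
      (setIntegral_nonneg_of_ae_restrict (ae_restrict_of_ae hφ_nonneg))]
  refine Real.iSup_le (fun ⟨A, hA⟩ => ?_) (by positivity)
  rw [hmeasure hp hp_nonneg hA, hmeasure hq hq_nonneg hA, ← integral_sub hp.restrict hq.restrict]
  exact abs_setIntegral_le_half_integral_abs (r := fun x => p x - q x) (hp.sub hq)
    (by rw [integral_sub hp hq, hpq, sub_self]) hA

end TotalVariation

lemma sqrt_exp_sq_sub_one_le_two_mul {ρ : ℝ} (hρ : 0 ≤ ρ) (hρ_lt : ρ < 1) :
    sqrt (exp (ρ ^ 2) - 1) ≤ 2 * ρ := by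
  have hρ_sq : |ρ ^ 2| ≤ 1 := by rw [abs_of_nonneg (sq_nonneg ρ)]; nlinarith
  have := (le_abs_self _).trans (abs_exp_sub_one_le hρ_sq)
  rw [abs_of_nonneg (sq_nonneg ρ)] at this
  rw [sqrt_le_iff]
  constructor <;> nlinarith

lemma norm_sub_smul_sub_sub_smul_le {E : Type*} [NormedAddCommGroup E] [NormedSpace ℝ E]
    {G : E → E} {η L : ℝ} (hη : 0 ≤ η) (hG : ∀ x y, ‖G x - G y‖ ≤ L * ‖x - y‖) (x y : E) :
    ‖(x - η • G x) - (y - η • G y)‖ ≤ (1 + η * L) * ‖x - y‖ := by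
  calc ‖(x - η • G x) - (y - η • G y)‖ = ‖(x - y) - η • (G x - G y)‖ := by
        rw [smul_sub]; abel_nf
    _ ≤ ‖x - y‖ + η * ‖G x - G y‖ := by
        rw [← norm_smul_of_nonneg hη]; exact norm_sub_le _ _
    _ ≤ (1 + η * L) * ‖x - y‖ := by nlinarith [hG x y]

section ProxWeight

variable {E : Type*} [NormedAddCommGroup E]

def proxWeight (η : ℝ) (g : E → ℝ) (u y : E) : ℝ :=
  exp (-‖y - u‖ ^ 2 / (4 * η) - g y)

lemma proxWeight_pos (η : ℝ) (g : E → ℝ) (u y : E) : 0 < proxWeight η g u y := exp_pos _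

lemma continuous_proxWeight (η : ℝ) {g : E → ℝ} (hg : Continuous g) (u : E) :
    Continuous (proxWeight η g u) := by
  unfold proxWeight; fun_prop

variable [InnerProductSpace ℝ E]

lemma proxWeight_mul_proxWeight (η : ℝ) (g : E → ℝ) (a b y : E) :
    proxWeight η g a y * proxWeight η g b y =
      exp (-‖a - b‖ ^ 2 / (8 * η)) * proxWeight η g (midpoint ℝ a b) y ^ 2 := by
  have h := EuclideanGeometry.dist_sq_add_dist_sq_eq_two_mul_dist_midpoint_sq_add_half_dist_sq y a b
  simp only [dist_eq_norm] at h
  simp only [proxWeight, ← exp_add, ← exp_nat_mul]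
  congr 1
  linear_combination (-1 / (4 * η)) * h

lemma proxWeight_mul_le_sq_midpoint {η : ℝ} (hη : 0 < η) {g : E → ℝ} (hg : ConvexOn ℝ univ g)
    (a b x y : E) :
    proxWeight η g a x * proxWeight η g b y ≤
      proxWeight η g (midpoint ℝ a b) (midpoint ℝ x y) ^ 2 := by
  have hnorm : 2 * ‖midpoint ℝ x y - midpoint ℝ a b‖ ^ 2 ≤ ‖x - a‖ ^ 2 + ‖y - b‖ ^ 2 := by
    have h := EuclideanGeometry.dist_sq_add_dist_sq_eq_two_mul_dist_midpoint_sq_add_half_dist_sq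
      (0 : E) (x - a) (y - b)
    rw [← vsub_eq_sub, midpoint_vsub_midpoint, vsub_eq_sub, vsub_eq_sub]
    simp only [dist_zero_left] at h
    nlinarith [sq_nonneg (dist (x - a) (y - b))]
  have hconv : g (midpoint ℝ x y) ≤ (g x + g y) / 2 := by
    have := hg.2 (mem_univ x) (mem_univ y) (by norm_num : (0 : ℝ) ≤ 2⁻¹)
      (by norm_num : (0 : ℝ) ≤ 2⁻¹) (by norm_num)
    rw [midpoint_eq_smul_add, invOf_eq_inv, smul_add]
    simp only [smul_eq_mul] at this
    linarith
  simp only [proxWeight, ← exp_add, ← exp_nat_mul]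
  gcongr
  have := div_le_div_of_nonneg_right hnorm (by positivity : (0 : ℝ) ≤ 4 * η)
  rw [add_div, mul_div_assoc] at this
  push_cast
  simp only [neg_div]
  linarith

variable [FiniteDimensional ℝ E] [MeasurableSpace E] [BorelSpace E]

lemma integrable_exp_neg_mul_sq_norm {c : ℝ} (hc : 0 < c) :
    Integrable fun v : E => exp (-c * ‖v‖ ^ 2) := by
  have := (GaussianFourier.integrable_cexp_neg_mul_sq_norm_add (V := E) (b := c)
    (by simpa using hc) 0 0).norm
  simpa [Complex.norm_exp, ← Complex.ofReal_pow] using this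

lemma integrable_proxWeight {η : ℝ} (hη : 0 < η) {g : E → ℝ} {K : ℝ≥0} (hg : LipschitzWith K g)
    (u : E) : Integrable (proxWeight η g u) := by
  refine (((integrable_exp_neg_mul_sq_norm (E := E) (c := (8 * η)⁻¹) (by positivity)).comp_sub_right
    u).const_mul (exp (2 * η * K ^ 2 - g u))).mono'
    (continuous_proxWeight η hg.continuous u).aestronglyMeasurable (ae_of_all _ fun y => ?_)
  rw [norm_of_nonneg (proxWeight_pos η g u y).le, proxWeight, ← exp_add]
  gcongr
  -- the Lipschitz lower bound on `g` is absorbed by half of the Gaussian factor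
  have hlip : g u - K * ‖y - u‖ ≤ g y := by
    have := hg.dist_le_mul y u
    rw [Real.dist_eq, dist_eq_norm] at this
    linarith [neg_abs_le (g y - g u)]
  have hsq : K * ‖y - u‖ ≤ ‖y - u‖ ^ 2 / (8 * η) + 2 * η * K ^ 2 := by
    rw [div_add' _ _ _ (by positivity), le_div_iff₀ (by positivity)]
    nlinarith [sq_nonneg (‖y - u‖ - 4 * η * K)]
  have h₁ : -‖y - u‖ ^ 2 / (4 * η) = -2 * (‖y - u‖ ^ 2 / (8 * η)) := by field_simp; ring
  have h₂ : -(8 * η)⁻¹ * ‖y - u‖ ^ 2 = -(‖y - u‖ ^ 2 / (8 * η)) := by ring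
  rw [h₁, h₂]
  linarith

end ProxWeight

section ProxDensity

variable {d : ℕ} {η : ℝ} {g : Euc d → ℝ} {K : ℝ≥0}

def proxDensity (d : ℕ) (η : ℝ) (g : Euc d → ℝ) (u y : Euc d) : ℝ :=
  (Zfun d η g u)⁻¹ * proxWeight η g u y

lemma Zfun_pos (hη : 0 < η) (hg : LipschitzWith K g) (u : Euc d) : 0 < Zfun d η g u :=
  integral_exp_pos (integrable_proxWeight hη hg u)

lemma Zfun_mul_le_sq_midpoint (hη : 0 < η) (hg : LipschitzWith K g) (hg_conv : ConvexOn ℝ univ g)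
    (a b : Euc d) : Zfun d η g a * Zfun d η g b ≤ Zfun d η g (midpoint ℝ a b) ^ 2 := by
  have hlintegral (u : Euc d) :
      ∫⁻ y, ENNReal.ofReal (proxWeight η g u y) = ENNReal.ofReal (Zfun d η g u) :=
    (ofReal_integral_eq_lintegral_ofReal (integrable_proxWeight hη hg u)
      (ae_of_all _ fun y => (proxWeight_pos η g u y).le)).symm
  have hmeas (u : Euc d) : Measurable fun y => ENNReal.ofReal (proxWeight η g u y) :=
    (continuous_proxWeight η hg.continuous u).measurable.ennreal_ofReal
  have key := midpointPrekopaLeindler_volume_euclideanSpace d _ _ _ (hmeas a) (hmeas b)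
    (hmeas (midpoint ℝ a b)) fun x y => by
      rw [← ENNReal.ofReal_mul (proxWeight_pos η g a x).le,
        ← ENNReal.ofReal_pow (proxWeight_pos η g _ _).le]
      exact ENNReal.ofReal_le_ofReal (proxWeight_mul_le_sq_midpoint hη hg_conv a b x y)
  rwa [hlintegral, hlintegral, hlintegral, ← ENNReal.ofReal_mul (Zfun_pos hη hg a).le,
    ← ENNReal.ofReal_pow (Zfun_pos hη hg _).le,
    ENNReal.ofReal_le_ofReal_iff (pow_nonneg (Zfun_pos hη hg _).le 2)] at key

lemma proxDensity_pos (hη : 0 < η) (hg : LipschitzWith K g) (u y : Euc d) :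
    0 < proxDensity d η g u y :=
  mul_pos (inv_pos.mpr (Zfun_pos hη hg u)) (proxWeight_pos η g u y)

lemma integrable_proxDensity (hη : 0 < η) (hg : LipschitzWith K g) (u : Euc d) :
    Integrable (proxDensity d η g u) :=
  (integrable_proxWeight hη hg u).const_mul _

lemma integral_proxDensity (hη : 0 < η) (hg : LipschitzWith K g) (u : Euc d) :
    ∫ y, proxDensity d η g u y = 1 := by
  simp only [proxDensity, integral_const_mul]
  exact inv_mul_cancel₀ (Zfun_pos hη hg u).ne'

-- reflecting `v` through `u` completes the square in `p_u² / p_v`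
lemma proxDensity_sq_div (hη : 0 < η) (hg : LipschitzWith K g) (u v y : Euc d) :
    proxDensity d η g u y ^ 2 / proxDensity d η g v y =
      Zfun d η g v / Zfun d η g u ^ 2 * exp (‖u - v‖ ^ 2 / (2 * η)) *
        proxWeight η g (Equiv.pointReflection u v) y := by
  have h := proxWeight_mul_proxWeight η g (Equiv.pointReflection u v) v y
  have hw : ‖Equiv.pointReflection u v - v‖ = 2 * ‖u - v‖ := by
    rw [Equiv.pointReflection_apply, vsub_eq_sub, vadd_eq_add,
      show u - v + u - v = (2 : ℝ) • (u - v) by module, norm_smul, Real.norm_two]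
  rw [midpoint_pointReflection_left, hw] at h
  have hexp : exp (‖u - v‖ ^ 2 / (2 * η)) * exp (-(2 * ‖u - v‖) ^ 2 / (8 * η)) = 1 := by
    rw [← exp_add, ← exp_zero]; congr 1; field_simp; ring
  have hsq : proxWeight η g u y ^ 2 = exp (‖u - v‖ ^ 2 / (2 * η)) *
      proxWeight η g (Equiv.pointReflection u v) y * proxWeight η g v y := by
    rw [mul_assoc, h, ← mul_assoc, hexp, one_mul]
  have := (Zfun_pos hη hg u).ne'
  have := (Zfun_pos hη hg v).ne'
  have := (proxWeight_pos η g v y).ne'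
  simp only [proxDensity, mul_pow, hsq]
  field_simp

lemma integrable_proxDensity_sq_div (hη : 0 < η) (hg : LipschitzWith K g) (u v : Euc d) :
    Integrable fun y => proxDensity d η g u y ^ 2 / proxDensity d η g v y := by
  simp only [proxDensity_sq_div hη hg]
  exact (integrable_proxWeight hη hg _).const_mul _

lemma integral_proxDensity_sq_div_le (hη : 0 < η) (hg : LipschitzWith K g)
    (hg_conv : ConvexOn ℝ univ g) (u v : Euc d) :
    ∫ y, proxDensity d η g u y ^ 2 / proxDensity d η g v y ≤ exp (‖u - v‖ ^ 2 / (2 * η)) := by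
  simp only [proxDensity_sq_div hη hg, integral_const_mul]
  have hPL := Zfun_mul_le_sq_midpoint hη hg hg_conv (Equiv.pointReflection u v) v
  rw [midpoint_pointReflection_left] at hPL
  have hZu := Zfun_pos hη hg u
  change Zfun d η g v / Zfun d η g u ^ 2 * exp (‖u - v‖ ^ 2 / (2 * η)) *
    Zfun d η g (Equiv.pointReflection u v) ≤ exp (‖u - v‖ ^ 2 / (2 * η))
  rw [mul_comm _ (exp _), mul_assoc, div_mul_eq_mul_div, mul_comm (Zfun d η g v)]
  exact mul_le_of_le_one_right (exp_pos _).le ((div_le_one (by positivity)).mpr hPL)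

theorem integral_abs_sub_proxDensity_le (hη : 0 < η) (hg : LipschitzWith K g)
    (hg_conv : ConvexOn ℝ univ g) (u v : Euc d) :
    ∫ y, |proxDensity d η g u y - proxDensity d η g v y| ≤
      sqrt (exp (‖u - v‖ ^ 2 / (2 * η)) - 1) := by
  refine (integral_abs_sub_le_sqrt_chiSq (integrable_proxDensity hη hg u)
    (integrable_proxDensity hη hg v) (proxDensity_pos hη hg v)
    (integrable_proxDensity_sq_div hη hg u v) (integral_proxDensity hη hg u)
    (integral_proxDensity hη hg v)).trans (sqrt_le_sqrt ?_)
  linarith [integral_proxDensity_sq_div_le hη hg hg_conv u v]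

theorem tvDist_proxMeasure_le (hη : 0 < η) (hg : LipschitzWith K g)
    (hg_conv : ConvexOn ℝ univ g) (u v : Euc d) :
    tvDist (proxMeasure d η g u) (proxMeasure d η g v) ≤ ‖u - v‖ / sqrt (2 * η) := by
  set ρ := ‖u - v‖ / sqrt (2 * η)
  have hρ : ‖u - v‖ ^ 2 / (2 * η) = ρ ^ 2 := by rw [div_pow, sq_sqrt (by positivity)]
  have hnonneg (w : Euc d) : 0 ≤ᵐ[volume] proxDensity d η g w :=
    ae_of_all _ fun y => (proxDensity_pos hη hg w y).le
  have hL1 : ∫ y, |proxDensity d η g u y - proxDensity d η g v y| ≤ 2 * ρ := by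
    rcases le_or_gt 1 ρ with hρ_ge | hρ_lt
    · linarith [integral_abs_sub_le_two (integrable_proxDensity hη hg u)
        (integrable_proxDensity hη hg v) (hnonneg u) (hnonneg v) (integral_proxDensity hη hg u)
        (integral_proxDensity hη hg v)]
    · refine (integral_abs_sub_proxDensity_le hη hg hg_conv u v).trans ?_
      rw [hρ]
      exact sqrt_exp_sq_sub_one_le_two_mul (by positivity) hρ_lt
  calc tvDist (proxMeasure d η g u) (proxMeasure d η g v)
      ≤ 1 / 2 * ∫ y, |proxDensity d η g u y - proxDensity d η g v y| :=
        tvDist_withDensity_le (integrable_proxDensity hη hg u) (integrable_proxDensity hη hg v)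
          (hnonneg u) (hnonneg v)
          ((integral_proxDensity hη hg u).trans (integral_proxDensity hη hg v).symm)
    _ ≤ ρ := by linarith

end ProxDensity

theorem proposal_tv_bound_general (d : ℕ) (η L M : ℝ) (f g : Euc d → ℝ)
    (hL : 0 < L) (hη : 0 < η) (hη' : η < 1 / (16 * L))
    (hsmooth : ∀ x y : Euc d, ‖gradient f x - gradient f y‖ ≤ L * ‖x - y‖)
    (hgconv : ConvexOn ℝ Set.univ g)
    (hg : ∀ x y : Euc d, |g x - g y| ≤ M * ‖x - y‖) :
    ∀ x₁ x₂ : Euc d,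
      tvDist (propMeasure d η f g x₁) (propMeasure d η f g x₂) ≤
        ‖x₁ - x₂‖ / Real.sqrt η := by
  intro x₁ x₂
  have hg_lip : LipschitzWith M.toNNReal g :=
    LipschitzWith.of_dist_le' fun x y => by rw [Real.dist_eq, dist_eq_norm]; exact hg x y
  have hstep : (1 + η * L) ^ 2 ≤ 2 := by
    rw [lt_div_iff₀ (by positivity)] at hη'
    nlinarith [mul_pos hη hL]
  -- `propMeasure d η f g x` is by definition `proxMeasure d η g (x - η • gradient f x)`
  calc tvDist (propMeasure d η f g x₁) (propMeasure d η f g x₂)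
      ≤ ‖(x₁ - η • gradient f x₁) - (x₂ - η • gradient f x₂)‖ / sqrt (2 * η) :=
        tvDist_proxMeasure_le hη hg_lip hgconv _ _
    _ ≤ sqrt 2 * ‖x₁ - x₂‖ / (sqrt 2 * sqrt η) := by
        rw [sqrt_mul zero_le_two]
        gcongr
        exact (norm_sub_smul_sub_sub_smul_le hη.le hsmooth x₁ x₂).trans
          (by gcongr; exact le_sqrt_of_sq_le hstep)
    _ = ‖x₁ - x₂‖ / sqrt η := mul_div_mul_left _ _ (by positivity)

/-- total variation bound between two proposal distributions:
`d_TV(P_{x₁}, P_{x₂}) ≤ ‖x₁−x₂‖/√η` for `η < 1/(16L)`. -/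
theorem proposal_tv_bound (d : ℕ) (η L M : ℝ) (f g : Euc d → ℝ)
    (hd : 1 ≤ d) (hL : 0 < L) (hη : 0 < η) (hη' : η < 1 / (16 * L))
    (hf : ContDiff ℝ 1 f)
    (hsmooth : ∀ x y : Euc d, ‖gradient f x - gradient f y‖ ≤ L * ‖x - y‖)
    (hgconv : ConvexOn ℝ Set.univ g)
    (hg : ∀ x y : Euc d, |g x - g y| ≤ M * ‖x - y‖) :
    ∀ x₁ x₂ : Euc d,
      tvDist (propMeasure d η f g x₁) (propMeasure d η f g x₂) ≤
        ‖x₁ - x₂‖ / Real.sqrt η :=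
  proposal_tv_bound_general d η L M f g hL hη hη' hsmooth hgconv hg
end
end
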